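/- arXiv:1503.00650 — 2 statements merged into one kernel-verified Lean document; each statement's English description precedes it below -/
import Mathlib

section
/- Let V be a finite type and G a consistent relation on V that has no closed walk of positive length (i.e., G is an acyclic functional digraph, a forest oriented from leaves to roots). Then for every k ≥ 1 there is a homomorphism from G to the directed cycle of length k: a map h : V → ZMod k such that G a b implies h b = h a + 1. -/
/-- A relation is consistent (satisfies the key constraint on the first attribute)
if it is functional. -/
def Consistent {V : Type*} (G : V → V → Prop) : Prop :=
  ∀ a b b', G a b → G a b' → b = b'

/-- A closed walk of length `n` in `G`: a map `ZMod n → V` following `G`-edges. -/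
def IsClosedWalk {V : Type*} (G : V → V → Prop) (n : ℕ) (g : ZMod n → V) : Prop :=
  ∀ i, G (g i) (g (i + 1))

theorem stmt8 {V : Type*} [Fintype V] (G : V → V → Prop) (hG : Consistent G)
    (hacyc : ∀ n : ℕ, 1 ≤ n → ¬ ∃ g : ZMod n → V, IsClosedWalk G n g) :
    ∀ k : ℕ, 1 ≤ k → ∃ h : V → ZMod k, ∀ a b, G a b → h b = h a + 1 := by
  classical
  intro k hk
  set f : V → V := fun a => if h : ∃ b, G a b then h.choose else a with hfdef
  have hf : ∀ a b, G a b → f a = b := by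
    intro a b h
    have he : ∃ b, G a b := ⟨b, h⟩
    simp only [hfdef, dif_pos he]
    exact hG a _ b he.choose_spec h
  -- every forward orbit reaches a terminal vertex
  have hterm : ∀ a : V, ∃ n : ℕ, ¬ ∃ b, G (f^[n] a) b := by
    intro a
    by_contra hc
    push_neg at hc
    have hstep : ∀ n : ℕ, G (f^[n] a) (f^[n + 1] a) := by
      intro n
      obtain ⟨b, hb⟩ := hc n
      rw [Function.iterate_succ_apply', hf _ _ hb]
      exact hb
    obtain ⟨i, j, hne, heq⟩ :=
      Finite.exists_ne_map_eq_of_infinite (fun n : ℕ => f^[n] a)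
    wlog hij : i < j generalizing i j
    · exact this j i hne.symm heq.symm (by omega)
    set n := j - i with hn
    have hn1 : 1 ≤ n := by omega
    haveI : NeZero n := ⟨by omega⟩
    have hper : f^[i + n] a = f^[i] a := by
      have hij' : i + n = j := by omega
      rw [hij']; exact heq.symm
    apply hacyc n hn1
    refine ⟨fun m => f^[i + m.val] a, ?_⟩
    intro m
    have hmlt : m.val < n := ZMod.val_lt m
    have hval : (m + 1).val = (m.val + 1) % n := by
      rw [ZMod.val_add, ZMod.val_one_eq_one_mod]
      conv_rhs => rw [Nat.add_mod, Nat.mod_eq_of_lt hmlt]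
    have hiter : f^[i + (m + 1).val] a = f^[i + m.val + 1] a := by
      rw [hval]
      rcases lt_or_eq_of_le (by omega : m.val + 1 ≤ n) with h1 | h1
      · rw [Nat.mod_eq_of_lt h1, ← Nat.add_assoc]
      · rw [h1, Nat.mod_self, Nat.add_zero]
        have : i + m.val + 1 = i + n := by omega
        rw [this, hper]
    show G (f^[i + m.val] a) (f^[i + (m + 1).val] a)
    rw [hiter]
    exact hstep (i + m.val)
  -- distance to terminal vertex
  set d : V → ℕ := fun a => Nat.find (hterm a) with hddef
  have hdspec : ∀ a, ¬ ∃ b, G (f^[d a] a) b := fun a => Nat.find_spec (hterm a)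
  have hkey : ∀ a b, G a b → d a = d b + 1 := by
    intro a b hab
    have hfa : f a = b := hf a b hab
    have hda : d a ≠ 0 := by
      intro h0
      exact hdspec a (by rw [h0]; exact ⟨b, hab⟩)
    obtain ⟨m, hm⟩ : ∃ m, d a = m + 1 := ⟨d a - 1, by omega⟩
    have h1 : d b ≤ m := by
      apply Nat.find_le
      have : f^[m] b = f^[d a] a := by
        rw [hm, Function.iterate_succ_apply, hfa]
      rw [this]
      exact hdspec a
    have h2 : d a ≤ d b + 1 := by
      apply Nat.find_le
      have : f^[d b + 1] a = f^[d b] b := by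
        rw [Function.iterate_succ_apply, hfa]
      rw [this]
      exact hdspec b
    omega
  refine ⟨fun a => -(d a : ZMod k), ?_⟩
  intro a b hab
  show -((d b : ZMod k)) = -(d a : ZMod k) + 1
  rw [hkey a b hab]
  push_cast
  ring
end

section
/- Let W be a nonempty finite type and G a consistent relation on W with no closed walk of positive length, and let n be the maximum length of a walk in G. Then for every nonempty type V and every relation D on V, there is a homomorphism from G to D if and only if D contains a walk of length n. (The core of an acyclic consistent canonical database is a simple path.) -/
/-- A walk of length `n` in `D`: a map `f : Fin (n+1) → V` with `D (f i) (f (i+1))`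
for all `i < n`. -/
def IsWalk {V : Type*} (D : V → V → Prop) (n : ℕ) (f : Fin (n + 1) → V) : Prop :=
  ∀ i : Fin n, D (f i.castSucc) (f i.succ)

lemma tail_walk {W : Type} (G : W → W → Prop) (hG : Consistent G) {a b : W}
    (hab : G a b) (m : ℕ) (hf : ∃ f : Fin (m + 1 + 1) → W, IsWalk G (m + 1) f ∧ f 0 = a) :
    ∃ g : Fin (m + 1) → W, IsWalk G m g ∧ g 0 = b := by
  obtain ⟨f, hf, hf0⟩ := hf
  have h0 := hf 0
  simp only [Fin.castSucc_zero, Fin.succ_zero_eq_one] at h0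
  have h1 : f 1 = b := hG a (f 1) b (hf0 ▸ h0) hab
  refine ⟨fun i => f i.succ, ?_, h1⟩
  intro i
  have := hf i.succ
  rwa [← Fin.succ_castSucc] at this

lemma cons_walk {W : Type} (G : W → W → Prop) {a b : W}
    (hab : G a b) (m : ℕ) (hg : ∃ g : Fin (m + 1) → W, IsWalk G m g ∧ g 0 = b) :
    ∃ f : Fin (m + 1 + 1) → W, IsWalk G (m + 1) f ∧ f 0 = a := by
  obtain ⟨g, hg, hg0⟩ := hg
  refine ⟨Fin.cases a g, ?_, by simp⟩
  intro i
  refine Fin.cases ?_ ?_ i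
  · show G (Fin.cases a g ((0 : Fin (m + 1)).castSucc)) (Fin.cases a g ((0 : Fin (m + 1)).succ))
    rw [Fin.castSucc_zero, Fin.cases_zero, Fin.cases_succ, hg0]
    exact hab
  · intro j
    have := hg j
    simpa [← Fin.succ_castSucc] using this

theorem stmt9 {W : Type} [Fintype W] [Nonempty W] (G : W → W → Prop) (hG : Consistent G)
    (hacyc : ∀ n : ℕ, 1 ≤ n →
      ¬ ∃ f : Fin (n + 1) → W, IsWalk G n f ∧ f (Fin.last n) = f 0)
    (n : ℕ) (hn : ∃ f : Fin (n + 1) → W, IsWalk G n f)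
    (hnmax : ∀ m : ℕ, (∃ f : Fin (m + 1) → W, IsWalk G m f) → m ≤ n) :
    ∀ (V : Type) (_ : Nonempty V) (D : V → V → Prop),
      (∃ h : W → V, ∀ a b, G a b → D (h a) (h b)) ↔
        ∃ f : Fin (n + 1) → V, IsWalk D n f := by
  intro V _ D
  constructor
  · rintro ⟨h, hh⟩
    obtain ⟨f, hf⟩ := hn
    exact ⟨fun i => h (f i), fun i => hh _ _ (hf i)⟩
  · rintro ⟨p, hp⟩
    classical
    set P : W → ℕ → Prop := fun w k => ∃ f : Fin (k + 1) → W, IsWalk G k f ∧ f 0 = w with hPdef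
    set ρ : W → ℕ := fun w => Nat.findGreatest (P w) n with hρdef
    have hP0 : ∀ w, P w 0 := fun w => ⟨fun _ => w, fun i => i.elim0, rfl⟩
    have hPle : ∀ w k, P w k → k ≤ n := by
      rintro w k ⟨f, hf, _⟩; exact hnmax k ⟨f, hf⟩
    have hρspec : ∀ w, P w (ρ w) := fun w =>
      Nat.findGreatest_spec (Nat.zero_le n) (hP0 w)
    have hρle : ∀ w, ρ w ≤ n := fun w => Nat.findGreatest_le n
    have key : ∀ a b, G a b → ρ a = ρ b + 1 := by
      intro a b hab
      have hpre : P a (ρ b + 1) := cons_walk G hab (ρ b) (hρspec b)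
      have h1 : ρ b + 1 ≤ ρ a := Nat.le_findGreatest (hPle a _ hpre) hpre
      have hpa := hρspec a
      obtain ⟨m, hm⟩ : ∃ m, ρ a = m + 1 := ⟨ρ a - 1, by omega⟩
      rw [hm] at hpa
      have htail : P b m := tail_walk G hG hab m hpa
      have h2 : m ≤ ρ b := Nat.le_findGreatest (hPle b _ htail) htail
      omega
    refine ⟨fun w => p ⟨n - ρ w, Nat.lt_succ_of_le (Nat.sub_le n _)⟩, ?_⟩
    intro a b hab
    have hk := key a b hab
    have hbn : ρ b + 1 ≤ n := hk ▸ hρle a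
    have hd := hp ⟨n - ρ b - 1, by omega⟩
    convert hd using 2 <;> simp [Fin.ext_iff] <;> omega
end
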